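/- Let N be a network and let a, b ∈ ℝ^n_{>0}. Then: (i) for every Hill-type kinetics K = (κ,δ,v) there exists a power-law kinetics (λ,w) such that I(v) = I(w), f_K(a) = f_{λ,w}(a) and f_K(b) = f_{λ,w}(b); (ii) for every power-law kinetics (λ,w) there exists a Hill-type kinetics K = (κ,δ,v) such that I(v) = I(w), f_K(a) = f_{λ,w}(a) and f_K(b) = f_{λ,w}(b). In particular, f_{λ,w}(a) = f_{λ,w}(b) for some power-law kinetics (λ,w) if and only if f_K(a) = f_K(b) for some Hill-type kinetics K = (κ,δ,v) with I(v) = I(w). -/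

import Mathlib

noncomputable section

namespace CRN

variable {n m : ℕ}

/-- The orthogonal complement of a subspace of `Fin n → ℝ` with respect to the
standard scalar product. -/
def orthComp (F : Submodule ℝ (Fin n → ℝ)) : Submodule ℝ (Fin n → ℝ) where
  carrier := {w | ∀ v ∈ F, ∑ i, w i * v i = 0}
  add_mem' := by
    intro a b ha hb v hv
    have h1 := ha v hv
    have h2 := hb v hv
    have key : ∀ i, (a + b) i * v i = a i * v i + b i * v i := fun i => by
      simp [add_mul]
    calc ∑ i, (a + b) i * v i
        = ∑ i, (a i * v i + b i * v i) := Finset.sum_congr rfl (fun i _ => key i)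
      _ = (∑ i, a i * v i) + ∑ i, b i * v i := Finset.sum_add_distrib
      _ = 0 := by rw [h1, h2, add_zero]
  zero_mem' := by
    intro v hv
    simp
  smul_mem' := by
    intro t a ha v hv
    have h1 := ha v hv
    simp only [Set.mem_setOf_eq, Pi.smul_apply, smul_eq_mul]
    calc ∑ i, t * a i * v i
        = t * ∑ i, a i * v i := by
          rw [Finset.mul_sum]
          exact Finset.sum_congr rfl fun i _ => (mul_assoc _ _ _)
      _ = 0 := by rw [h1, mul_zero]

/-- `ω` is a reduced basis of `F^⊥`: it is a basis of the orthogonal complement of `F`,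
`ω i` has `i`-th coordinate `1`, and `j`-th coordinate `0` for every `j < d`, `j ≠ i`. -/
def IsReducedBasis (d : ℕ) (F : Submodule ℝ (Fin n → ℝ)) (ω : Fin d → Fin n → ℝ) : Prop :=
  (∀ i, ω i ∈ orthComp F) ∧
  Submodule.span ℝ (Set.range ω) = orthComp F ∧
  LinearIndependent ℝ ω ∧
  (∀ (i : Fin d) (j : Fin n), (j : ℕ) = (i : ℕ) → ω i j = 1) ∧
  (∀ (i : Fin d) (j : Fin n), (j : ℕ) < d → (j : ℕ) ≠ (i : ℕ) → ω i j = 0)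

/-- The matrix whose top `d` rows are `ω` and whose remaining rows agree with `M`. -/
def tildeMat (d : ℕ) (ω : Fin d → Fin n → ℝ) (M : Matrix (Fin n) (Fin n) ℝ) :
    Matrix (Fin n) (Fin n) ℝ :=
  Matrix.of fun i j => if h : (i : ℕ) < d then ω ⟨(i : ℕ), h⟩ j else M i j

/-- The stoichiometric matrix: `r`-th column is `y' r - y r`. -/
def stoich (y y' : Fin m → Fin n → ℝ) : Matrix (Fin n) (Fin m) ℝ :=
  Matrix.of fun i r => y' r i - y r i

/-- The stoichiometric subspace: the span of the reaction vectors `y' r - y r`. -/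
def stoichSpan (y y' : Fin m → Fin n → ℝ) : Submodule ℝ (Fin n → ℝ) :=
  Submodule.span ℝ (Set.range fun r => (fun i => y' r i - y r i))

/-- The matrix whose `r`-th row is the kinetic-order vector `v r`. -/
def Zmat (v : Fin m → Fin n → ℝ) : Matrix (Fin m) (Fin n) ℝ :=
  Matrix.of fun r i => v r i

/-- The Jacobian matrix of `f` at `c`. -/
def jac (f : (Fin n → ℝ) → Fin n → ℝ) (c : Fin n → ℝ) : Matrix (Fin n) (Fin n) ℝ :=
  Matrix.of fun i j => fderiv ℝ (fun x => f x i) c (Pi.single j 1)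

/-- The species formation rate function of a kinetics `K`. -/
def specForm (y y' : Fin m → Fin n → ℝ) (K : Fin m → (Fin n → ℝ) → ℝ) (c : Fin n → ℝ) :
    Fin n → ℝ :=
  fun i => ∑ r, K r c * (y' r i - y r i)

/-- The power-law rate functions with rate vector `κ` and kinetic order `v`. -/
def powerLaw (κ : Fin m → ℝ) (v : Fin m → Fin n → ℝ) : Fin m → (Fin n → ℝ) → ℝ :=
  fun r c => κ r * ∏ j, c j ^ v r j

/-- The power-law species formation rate function. -/
def plf (y y' : Fin m → Fin n → ℝ) (κ : Fin m → ℝ) (v : Fin m → Fin n → ℝ) (c : Fin n → ℝ) :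
    Fin n → ℝ :=
  fun i => ∑ r, κ r * (∏ j, c j ^ v r j) * (y' r i - y r i)

/-- The extended rate function associated with a reduced basis `ω` and `f`. -/
def tildeF (d : ℕ) (ω : Fin d → Fin n → ℝ) (f : (Fin n → ℝ) → Fin n → ℝ) (c : Fin n → ℝ) :
    Fin n → ℝ :=
  fun i => if h : (i : ℕ) < d then ∑ j, ω ⟨(i : ℕ), h⟩ j * c j else f c i

/-- The extended rate function with the bottom `s` components negated. -/
def hatF (d : ℕ) (ω : Fin d → Fin n → ℝ) (f : (Fin n → ℝ) → Fin n → ℝ) (c : Fin n → ℝ) :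
    Fin n → ℝ :=
  fun i => if h : (i : ℕ) < d then ∑ j, ω ⟨(i : ℕ), h⟩ j * c j else -(f c i)

/-- Membership in the positive orthant. -/
def Pos (c : Fin n → ℝ) : Prop := ∀ i, 0 < c i

/-- The network is injective over the power-law kinetics with fixed kinetic order `v`. -/
def InjOverPL (y y' : Fin m → Fin n → ℝ) (v : Fin m → Fin n → ℝ) : Prop :=
  ∀ κ : Fin m → ℝ, (∀ r, 0 < κ r) → ∀ a b : Fin n → ℝ, Pos a → Pos b → a ≠ b →
    a - b ∈ stoichSpan y y' → plf y y' κ v a ≠ plf y y' κ v b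

/-- An influence specification takes values in `{-1, 0, 1}`. -/
def IsInfluence (I : Fin m → Fin n → ℝ) : Prop := ∀ r i, I r i = -1 ∨ I r i = 0 ∨ I r i = 1

/-- The influence specification associated with a kinetic order `v`. -/
def infOf (v : Fin m → Fin n → ℝ) : Fin m → Fin n → ℝ := fun r i => Real.sign (v r i)

/-- `v ∈ Σ(I)`: the kinetic order `v` has associated influence specification `I`. -/
def InSigma (I : Fin m → Fin n → ℝ) (v : Fin m → Fin n → ℝ) : Prop :=
  ∀ r i, Real.sign (v r i) = I r i

/-- The partial order `I' ≼ I` on influence specifications. -/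
def Preceq (I' I : Fin m → Fin n → ℝ) : Prop :=
  ∀ r i, (I' r i = 1 → I r i = 1) ∧ (I' r i = -1 → I r i = -1)

/-- The matrix `M̃(v)`: top `d` rows `ω`, bottom rows from `A ⬝ Z(v)`. -/
def Mt (y y' : Fin m → Fin n → ℝ) (d : ℕ) (ω : Fin d → Fin n → ℝ)
    (v : Fin m → Fin n → ℝ) : Matrix (Fin n) (Fin n) ℝ :=
  tildeMat d ω (stoich y y' * Zmat v)

/-- The influence specification `I` has a signed determinant. -/
def SignedDet (y y' : Fin m → Fin n → ℝ) (d : ℕ) (ω : Fin d → Fin n → ℝ)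
    (I : Fin m → Fin n → ℝ) : Prop :=
  ∀ v w, InSigma I v → InSigma I w →
    Real.sign (Mt y y' d ω v).det = Real.sign (Mt y y' d ω w).det

/-- The influence specification `I` is sign-nonsingular (SNS). -/
def IsSNS (y y' : Fin m → Fin n → ℝ) (d : ℕ) (ω : Fin d → Fin n → ℝ)
    (I : Fin m → Fin n → ℝ) : Prop :=
  SignedDet y y' d ω I ∧ ∀ v, InSigma I v → (Mt y y' d ω v).det ≠ 0

/-- `Ω` is an admissible kinetics domain: `ℝ^n_{>0} ⊆ Ω ⊆ ℝ^n_{≥0}`. -/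
def KinDom (Ω : Set (Fin n → ℝ)) : Prop :=
  {c : Fin n → ℝ | ∀ i, 0 < c i} ⊆ Ω ∧ Ω ⊆ {c : Fin n → ℝ | ∀ i, 0 ≤ c i}

/-- The rate functions are nonnegative on the domain. -/
def KinNonneg (Ω : Set (Fin n → ℝ)) (K : Fin m → (Fin n → ℝ) → ℝ) : Prop :=
  ∀ r, ∀ c ∈ Ω, 0 ≤ K r c

/-- `I_r^+ ⊆ supp c`. -/
def PosSupp (I : Fin m → Fin n → ℝ) (r : Fin m) (c : Fin n → ℝ) : Prop :=
  ∀ i, I r i = 1 → c i ≠ 0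

/-- The kinetics `K` respects the influence specification `I`. -/
def Respects (Ω : Set (Fin n → ℝ)) (K : Fin m → (Fin n → ℝ) → ℝ)
    (I : Fin m → Fin n → ℝ) : Prop :=
  ∀ c ∈ Ω, ∀ r, (0 < K r c ↔ PosSupp I r c)

/-- The kinetics `K` is strictly monotonic with respect to `I`. -/
def StrictlyMonotonic (Ω : Set (Fin n → ℝ)) (K : Fin m → (Fin n → ℝ) → ℝ)
    (I : Fin m → Fin n → ℝ) : Prop :=
  Respects Ω K I ∧
  ∀ (r : Fin m) (c d : Fin n → ℝ), c ∈ Ω → d ∈ Ω → PosSupp I r c → PosSupp I r d →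
    ∀ i, (∀ j, j ≠ i → c j = d j) →
      ((I r i = 1 → c i < d i → K r c < K r d) ∧
       (I r i = -1 → c i < d i → K r d < K r c) ∧
       (I r i = 0 → K r c = K r d))

/-- The kinetics `K` is differentiable with respect to `I`. -/
def DiffWrt (Ω : Set (Fin n → ℝ)) (K : Fin m → (Fin n → ℝ) → ℝ)
    (I : Fin m → Fin n → ℝ) : Prop :=
  Respects Ω K I ∧
  (∀ r, ∀ c ∈ Ω, ContinuousWithinAt (K r) Ω c) ∧
  (∀ (r : Fin m) (c : Fin n → ℝ), (∀ i, 0 < c i) → DifferentiableAt ℝ (K r) c) ∧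
  (∀ (r : Fin m) (c : Fin n → ℝ), (∀ i, 0 < c i) → ∀ i,
     Real.sign (fderiv ℝ (K r) c (Pi.single i 1)) = I r i)

/-- `a` and `b` are non-overlapping with respect to `I`. -/
def NonOverlap (I : Fin m → Fin n → ℝ) (a b : Fin n → ℝ) : Prop :=
  ∀ r, ¬ PosSupp I r a → PosSupp I r b

/-- The kinetics `K` is weakly monotonic with respect to `I`. -/
def WeaklyMonotonic (y : Fin m → Fin n → ℝ) (Ω : Set (Fin n → ℝ))
    (K : Fin m → (Fin n → ℝ) → ℝ) (I : Fin m → Fin n → ℝ) : Prop :=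
  ∀ a ∈ Ω, ∀ b ∈ Ω, NonOverlap I a b → ∀ r,
    (K r b < K r a → ∃ i, Real.sign (a i - b i) = I r i ∧ I r i ≠ 0) ∧
    (K r a = K r b →
      ((∀ i, y r i ≠ 0 → a i = b i) ∨
        ∃ i j, i ≠ j ∧ Real.sign (a i - b i) = I r i ∧ I r i ≠ 0 ∧
          Real.sign (a j - b j) = -(I r j) ∧ I r j ≠ 0))

/-- A square real matrix is a P-matrix: all principal minors are positive. -/
def IsPMatrix {N : ℕ} (M : Matrix (Fin N) (Fin N) ℝ) : Prop :=
  ∀ J : Finset (Fin N),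
    0 < (M.submatrix (fun i : {x // x ∈ J} => (i : Fin N))
          (fun j : {x // x ∈ J} => (j : Fin N))).det

/-- The minor `det(A_{J,C})` of the stoichiometric matrix. -/
def subDetA (y y' : Fin m → Fin n → ℝ) (s : ℕ) (J : Finset (Fin n)) (C : Finset (Fin m))
    (hJ : J.card = s) (hC : C.card = s) : ℝ :=
  ((stoich y y').submatrix (fun a => (J.orderIsoOfFin hJ a).1)
    (fun b => (C.orderIsoOfFin hC b).1)).det

/-- The minor `det(Z(v)_{C,J})`. -/
def subDetZ (v : Fin m → Fin n → ℝ) (s : ℕ) (C : Finset (Fin m)) (J : Finset (Fin n))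
    (hC : C.card = s) (hJ : J.card = s) : ℝ :=
  ((Zmat v).submatrix (fun a => (C.orderIsoOfFin hC a).1)
    (fun b => (J.orderIsoOfFin hJ b).1)).det

/-- The Hill-type species formation rate function. -/
def hillf (y y' : Fin m → Fin n → ℝ) (κ : Fin m → ℝ) (δ v : Fin m → Fin n → ℝ)
    (c : Fin n → ℝ) : Fin n → ℝ :=
  fun i => ∑ r, κ r * (∏ j, (c j ^ v r j) / (δ r j + c j ^ v r j)) * (y' r i - y r i)

/-! Both kinetics are products over species of one-variable factors, so it suffices to match,
species by species, the ratio of the values of the factor at `a` and at `b`; the rate constants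
then absorb the values at `a`. A power `x ^ w` has ratio `(a_j / b_j) ^ w`, and a Hill factor is
increasing or decreasing according to the sign of its exponent, so the matching exponents have the
same signs. -/

def hillFactor (δ v x : ℝ) : ℝ := x ^ v / (δ + x ^ v)

lemma hillFactor_pos {δ v x : ℝ} (hδ : 0 ≤ δ) (hx : 0 < x) : 0 < hillFactor δ v x := by
  have := Real.rpow_pos_of_pos hx v
  unfold hillFactor
  positivity

lemma div_add_self_lt_div_add_self {δ P Q : ℝ} (hδ : 0 < δ) (hP : 0 ≤ P) (hPQ : P < Q) :
    P / (δ + P) < Q / (δ + Q) := by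
  rw [div_lt_div_iff₀ (by linarith) (by linarith)]
  nlinarith

lemma hillFactor_lt_hillFactor {δ v A B : ℝ} (hδ : 0 < δ) (hv : 0 < v) (hA : 0 < A)
    (hAB : A < B) : hillFactor δ v A < hillFactor δ v B :=
  div_add_self_lt_div_add_self hδ (Real.rpow_nonneg hA.le v) (Real.rpow_lt_rpow hA.le hAB hv)

lemma hillFactor_lt_hillFactor_of_neg {δ v A B : ℝ} (hδ : 0 < δ) (hv : v < 0) (hA : 0 < A)
    (hAB : A < B) : hillFactor δ v B < hillFactor δ v A :=
  div_add_self_lt_div_add_self hδ (Real.rpow_nonneg (hA.trans hAB).le v)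
    (Real.rpow_lt_rpow_of_neg hA hAB hv)

/-- The exponent is `w = log_{A/B} (F A / F B)` for the Hill factor `F`; its sign is that of `v`
because `F` is increasing for `v > 0` and decreasing for `v < 0`. -/
lemma exists_sign_eq_and_hillFactor_mul_rpow_eq {δ v A B : ℝ} (hA : 0 < A) (hB : 0 < B)
    (hδ : 0 ≤ δ) (hδv : δ ≠ 0 ↔ v ≠ 0) :
    ∃ w, Real.sign w = Real.sign v ∧ hillFactor δ v A * B ^ w = hillFactor δ v B * A ^ w := by
  wlog hAB : A ≤ B generalizing A B
  · obtain ⟨w, hsign, h⟩ := this hB hA (le_of_not_ge hAB)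
    exact ⟨w, hsign, h.symm⟩
  rcases hAB.eq_or_lt with rfl | hAB
  · exact ⟨v, rfl, rfl⟩
  by_cases hv : v = 0
  · have hδ0 : δ = 0 := not_not.mp fun h => hδv.mp h hv
    exact ⟨0, by rw [hv], by simp [hillFactor, hv, hδ0]⟩
  have hδpos : 0 < δ := hδ.lt_of_ne' (hδv.mpr hv)
  have hFA := hillFactor_pos (v := v) hδ hA
  have hFB := hillFactor_pos (v := v) hδ hB
  have hβ : A / B < 1 := (div_lt_one hB).mpr hAB
  refine ⟨Real.logb (A / B) (hillFactor δ v A / hillFactor δ v B), ?_, ?_⟩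
  · rcases lt_or_gt_of_ne hv with hv | hv
    · have hρ : 1 < hillFactor δ v A / hillFactor δ v B :=
        (one_lt_div hFB).mpr (hillFactor_lt_hillFactor_of_neg hδpos hv hA hAB)
      rw [Real.sign_of_neg hv,
        Real.sign_of_neg (Real.logb_neg_of_base_lt_one (by positivity) hβ hρ)]
    · have hρ : hillFactor δ v A / hillFactor δ v B < 1 :=
        (div_lt_one hFB).mpr (hillFactor_lt_hillFactor hδpos hv hA hAB)
      rw [Real.sign_of_pos hv,
        Real.sign_of_pos (Real.logb_pos_of_base_lt_one (by positivity) hβ (by positivity) hρ)]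
  · have hpow := Real.rpow_logb (b := A / B) (by positivity) hβ.ne (div_pos hFA hFB)
    rw [Real.div_rpow hA.le hB.le] at hpow
    have hBw := Real.rpow_pos_of_pos hB (Real.logb (A / B) (hillFactor δ v A / hillFactor δ v B))
    rw [div_eq_div_iff hBw.ne' hFB.ne'] at hpow
    linarith

/-- With `δ = A ^ w * B ^ w`, the Hill factor with exponent `2 w` is `A ^ w / (A ^ w + B ^ w)`
at `A` and `B ^ w / (A ^ w + B ^ w)` at `B`. -/
lemma exists_hillFactor_mul_rpow_eq {A B : ℝ} (hA : 0 < A) (hB : 0 < B) (w : ℝ) :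
    ∃ δ v, 0 ≤ δ ∧ (δ ≠ 0 ↔ v ≠ 0) ∧ Real.sign v = Real.sign w ∧
      hillFactor δ v A * B ^ w = hillFactor δ v B * A ^ w := by
  by_cases hw : w = 0
  · exact ⟨0, 0, le_rfl, Iff.rfl, by rw [hw], by simp [hillFactor, hw]⟩
  have hAw := Real.rpow_pos_of_pos hA w
  have hBw := Real.rpow_pos_of_pos hB w
  refine ⟨A ^ w * B ^ w, 2 * w, by positivity, ⟨fun _ => by positivity, fun _ => by positivity⟩,
    ?_, ?_⟩
  · rcases lt_or_gt_of_ne hw with hw | hw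
    · rw [Real.sign_of_neg hw, Real.sign_of_neg (by linarith)]
    · rw [Real.sign_of_pos hw, Real.sign_of_pos (by linarith)]
  · simp only [hillFactor, two_mul, Real.rpow_add hA, Real.rpow_add hB]
    field_simp
    ring

lemma exists_pos_mul_prod_eq_mul_prod {ι : Type*} [Fintype ι] {κ : ℝ} {P Q X Y : ι → ℝ}
    (hκ : 0 < κ) (hP : ∀ j, 0 < P j) (hX : ∀ j, 0 < X j) (hcross : ∀ j, P j * Y j = Q j * X j) :
    ∃ lam, 0 < lam ∧ κ * ∏ j, P j = lam * ∏ j, X j ∧ κ * ∏ j, Q j = lam * ∏ j, Y j := by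
  refine ⟨κ * ∏ j, P j / X j, mul_pos hκ (Finset.prod_pos fun j _ => div_pos (hP j) (hX j)),
    ?_, ?_⟩
  · rw [Finset.prod_div_distrib, mul_assoc, div_mul_cancel₀]
    exact Finset.prod_ne_zero_iff.mpr fun j _ => (hX j).ne'
  · rw [mul_assoc, ← Finset.prod_mul_distrib]
    congr 1
    refine Finset.prod_congr rfl fun j _ => ?_
    rw [div_mul_eq_mul_div, hcross j, mul_div_cancel_right₀ _ (hX j).ne']

lemma hillf_eq_plf_of_rate_eq {y y' : Fin m → Fin n → ℝ} {κ lam : Fin m → ℝ}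
    {δ v w : Fin m → Fin n → ℝ} {c : Fin n → ℝ}
    (h : ∀ r, κ r * ∏ j, hillFactor (δ r j) (v r j) (c j) = lam r * ∏ j, c j ^ w r j) :
    hillf y y' κ δ v c = plf y y' lam w c :=
  funext fun _ => Finset.sum_congr rfl fun r _ => congrArg (· * _) (h r)

theorem exists_plf_eq_hillf (y y' : Fin m → Fin n → ℝ) {a b : Fin n → ℝ} (ha : ∀ i, 0 < a i)
    (hb : ∀ i, 0 < b i) {κ : Fin m → ℝ} {δ v : Fin m → Fin n → ℝ} (hκ : ∀ r, 0 < κ r)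
    (hδ : ∀ r j, 0 ≤ δ r j) (hδv : ∀ r j, δ r j ≠ 0 ↔ v r j ≠ 0) :
    ∃ (lam : Fin m → ℝ) (w : Fin m → Fin n → ℝ), (∀ r, 0 < lam r) ∧
      (∀ r i, Real.sign (v r i) = Real.sign (w r i)) ∧
      hillf y y' κ δ v a = plf y y' lam w a ∧ hillf y y' κ δ v b = plf y y' lam w b := by
  choose w hsign hcross using fun r j =>
    exists_sign_eq_and_hillFactor_mul_rpow_eq (ha j) (hb j) (hδ r j) (hδv r j)
  choose lam hlam hrate_a hrate_b using fun r =>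
    exists_pos_mul_prod_eq_mul_prod (hκ r) (fun j => hillFactor_pos (hδ r j) (ha j))
      (fun j => Real.rpow_pos_of_pos (ha j) (w r j)) (hcross r)
  exact ⟨lam, w, hlam, fun r i => (hsign r i).symm, hillf_eq_plf_of_rate_eq hrate_a,
    hillf_eq_plf_of_rate_eq hrate_b⟩

theorem exists_hillf_eq_plf (y y' : Fin m → Fin n → ℝ) {a b : Fin n → ℝ} (ha : ∀ i, 0 < a i)
    (hb : ∀ i, 0 < b i) {lam : Fin m → ℝ} {w : Fin m → Fin n → ℝ} (hlam : ∀ r, 0 < lam r) :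
    ∃ (κ : Fin m → ℝ) (δ v : Fin m → Fin n → ℝ),
      (∀ r, 0 < κ r) ∧ (∀ r j, 0 ≤ δ r j) ∧ (∀ r j, δ r j ≠ 0 ↔ v r j ≠ 0) ∧
      (∀ r i, Real.sign (v r i) = Real.sign (w r i)) ∧
      hillf y y' κ δ v a = plf y y' lam w a ∧ hillf y y' κ δ v b = plf y y' lam w b := by
  choose δ v hδ hδv hsign hcross using fun r j =>
    exists_hillFactor_mul_rpow_eq (ha j) (hb j) (w r j)
  choose κ hκ hrate_a hrate_b using fun r =>
    exists_pos_mul_prod_eq_mul_prod (Q := fun j => b j ^ w r j)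
      (Y := fun j => hillFactor (δ r j) (v r j) (b j)) (hlam r)
      (fun j => Real.rpow_pos_of_pos (ha j) (w r j)) (fun j => hillFactor_pos (hδ r j) (ha j))
      (fun j => by linarith [hcross r j])
  exact ⟨κ, δ, v, hκ, hδ, hδv, hsign, hillf_eq_plf_of_rate_eq fun r => (hrate_a r).symm,
    hillf_eq_plf_of_rate_eq fun r => (hrate_b r).symm⟩

/-- Theorem `hill`. -/
theorem stmt19 {n m : ℕ}
    (y y' : Fin m → Fin n → ℝ)
    (a b : Fin n → ℝ) (ha : ∀ i, 0 < a i) (hb : ∀ i, 0 < b i) :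
    ((∀ (κ : Fin m → ℝ) (δ v : Fin m → Fin n → ℝ),
        (∀ r, 0 < κ r) → (∀ r j, 0 ≤ δ r j) → (∀ r j, δ r j ≠ 0 ↔ v r j ≠ 0) →
        ∃ (lam : Fin m → ℝ) (w : Fin m → Fin n → ℝ), (∀ r, 0 < lam r) ∧
          (∀ r i, Real.sign (v r i) = Real.sign (w r i)) ∧
          hillf y y' κ δ v a = plf y y' lam w a ∧
          hillf y y' κ δ v b = plf y y' lam w b) ∧
      (∀ (lam : Fin m → ℝ) (w : Fin m → Fin n → ℝ), (∀ r, 0 < lam r) →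
        ∃ (κ : Fin m → ℝ) (δ v : Fin m → Fin n → ℝ),
          (∀ r, 0 < κ r) ∧ (∀ r j, 0 ≤ δ r j) ∧ (∀ r j, δ r j ≠ 0 ↔ v r j ≠ 0) ∧
          (∀ r i, Real.sign (v r i) = Real.sign (w r i)) ∧
          hillf y y' κ δ v a = plf y y' lam w a ∧
          hillf y y' κ δ v b = plf y y' lam w b)) ∧
    ((∃ (lam : Fin m → ℝ) (w : Fin m → Fin n → ℝ), (∀ r, 0 < lam r) ∧
        plf y y' lam w a = plf y y' lam w b) ↔
      (∃ (κ : Fin m → ℝ) (δ v : Fin m → Fin n → ℝ),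
        (∀ r, 0 < κ r) ∧ (∀ r j, 0 ≤ δ r j) ∧ (∀ r j, δ r j ≠ 0 ↔ v r j ≠ 0) ∧
        hillf y y' κ δ v a = hillf y y' κ δ v b)) := by
  refine ⟨⟨fun κ δ v hκ hδ hδv => exists_plf_eq_hillf y y' ha hb hκ hδ hδv,
    fun lam w hlam => exists_hillf_eq_plf y y' ha hb hlam⟩, ?_, ?_⟩
  · rintro ⟨lam, w, hlam, heq⟩
    obtain ⟨κ, δ, v, hκ, hδ, hδv, -, hfa, hfb⟩ := exists_hillf_eq_plf y y' ha hb (w := w) hlam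
    exact ⟨κ, δ, v, hκ, hδ, hδv, by rw [hfa, hfb, heq]⟩
  · rintro ⟨κ, δ, v, hκ, hδ, hδv, heq⟩
    obtain ⟨lam, w, hlam, -, hfa, hfb⟩ := exists_plf_eq_hillf y y' ha hb hκ hδ hδv
    exact ⟨lam, w, hlam, by rw [← hfa, ← hfb, heq]⟩
end CRN
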